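/- arXiv:math/0504287 — 2 statements merged into one kernel-verified Lean document; each statement's English description precedes it below -/
import Mathlib

section
/- Let p be a prime, and in the polynomial ring ℤ[x] set t = x − 1 and s = 1 + x + x² + ⋯ + x^{p−1}. Then there exist polynomials f, g, h ∈ ℤ[x] such that h(1) = −1, t^{p−1} = p·h + s, and p = −t^{p−1} + t^p·f + s·g. -/
noncomputable section

universe u

open Polynomial in
/-- Lemma 1.11. -/
theorem stmt_9 (p : ℕ) (hp : p.Prime) :
    ∃ f g h : ℤ[X], h.eval 1 = -1 ∧
      (X - 1 : ℤ[X]) ^ (p - 1) = (p : ℤ[X]) * h + ∑ i ∈ Finset.range p, X ^ i ∧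
      (p : ℤ[X]) = -(X - 1) ^ (p - 1) + (X - 1) ^ p * f +
        (∑ i ∈ Finset.range p, X ^ i) * g := by
  haveI : Fact p.Prime := ⟨hp⟩
  set s : ℤ[X] := ∑ i ∈ Finset.range p, X ^ i with hs
  -- divisibility
  have hdvd : (p : ℤ[X]) ∣ (X - 1 : ℤ[X]) ^ (p - 1) - s := by
    have hmap : Polynomial.map (Int.castRingHom (ZMod p))
        ((X - 1 : ℤ[X]) ^ (p - 1) - s) = 0 := by
      have key : ((X - 1 : (ZMod p)[X]) ^ (p - 1)) = ∑ i ∈ Finset.range p, X ^ i := by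
        have hx : (X - 1 : (ZMod p)[X]) ≠ 0 := by
          intro h
          have := congrArg (Polynomial.eval 0) h
          simp at this
        apply mul_right_cancel₀ hx
        rw [← pow_succ, Nat.sub_add_cancel hp.one_le, geom_sum_mul]
        have hc : (X - 1 : (ZMod p)[X]) ^ p = X ^ p - 1 ^ p := sub_pow_char X 1
        simp [hc]
      simp [hs, Polynomial.map_sub, Polynomial.map_pow, Polynomial.map_sum, key]
    rw [show ((p : ℤ[X])) = Polynomial.C (p : ℤ) by simp]
    rw [Polynomial.C_dvd_iff_dvd_coeff]
    intro n
    have h2 := congrArg (fun q => q.coeff n) hmap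
    simp only [Polynomial.coeff_map, Polynomial.coeff_zero] at h2
    exact (ZMod.intCast_zmod_eq_zero_iff_dvd _ p).mp (by simpa using h2)
  obtain ⟨h, hh⟩ := hdvd
  have hh' : (X - 1 : ℤ[X]) ^ (p - 1) = (p : ℤ[X]) * h + s := by linear_combination hh
  have hs1 : s.eval 1 = (p : ℤ) := by simp [hs]
  have hp0 : (p : ℤ) ≠ 0 := by exact_mod_cast hp.ne_zero
  have hev : h.eval 1 = -1 := by
    have h3 := congrArg (Polynomial.eval 1) hh'
    simp [hs1] at h3
    rw [zero_pow (show p - 1 ≠ 0 by have := hp.two_le; omega)] at h3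
    have h4 : (p : ℤ) * h.eval 1 = (p : ℤ) * (-1) := by linarith
    exact mul_left_cancel₀ hp0 h4
  -- k : X - 1 ∣ h + 1
  have hroot : (X - Polynomial.C (1:ℤ)) ∣ h + 1 := by
    rw [Polynomial.dvd_iff_isRoot]
    simp [Polynomial.IsRoot, hev]
  obtain ⟨k, hk⟩ := hroot
  have hk' : h = (X - 1) * k - 1 := by
    have : (X - Polynomial.C (1:ℤ)) = X - 1 := by simp
    rw [this] at hk
    linear_combination hk
  set t : ℤ[X] := X - 1 with ht
  -- geometric sum identity
  have hgeom : (∑ i ∈ Finset.range p, (t * k) ^ i) * (t * k - 1) = (t * k) ^ p - 1 :=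
    geom_sum_mul (t * k) p
  have hsplit : (∑ i ∈ Finset.range p, (t * k) ^ i)
      = (t * k) * (∑ i ∈ Finset.range (p - 1), (t * k) ^ i) + 1 := by
    conv_lhs => rw [show p = (p - 1) + 1 from (Nat.sub_add_cancel hp.one_le).symm]
    exact geom_sum_succ
  refine ⟨(p : ℤ[X]) * k ^ p - k * ∑ i ∈ Finset.range (p - 1), (t * k) ^ i,
    ∑ i ∈ Finset.range p, (t * k) ^ i, h, hev, hh', ?_⟩
  have hph : (p : ℤ[X]) * h = t ^ (p - 1) - s := by linear_combination -hh'
  have htp : t ^ p = t ^ (p - 1) * t := by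
    rw [← pow_succ, Nat.sub_add_cancel hp.one_le]
  rw [htp]
  linear_combination (p : ℤ[X]) * hgeom - (∑ i ∈ Finset.range p, (t*k)^i) * hph
    + (p : ℤ[X]) * (∑ i ∈ Finset.range p, (t*k)^i) * hk'
    - t^(p-1) * hsplit + (p : ℤ[X]) * k^p * htp + (p : ℤ[X]) * mul_pow t k p

end
end

section
/- Let p be a prime, and in ℤ[x] set t = x − 1 and s = 1 + x + x² + ⋯ + x^{p−1}. Let h ∈ ℤ[x] be any polynomial satisfying t^{p−1} = p·h + s. Then for every integer k ≥ 1, the congruence t^{k(p−1)} ≡ p^k·h^k + (−1)^{k−1}·p^{k−1}·s holds modulo the ideal (x^p − 1) of ℤ[x]. -/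
noncomputable section

universe u

open Polynomial in
/-- The congruence `t^{k(p-1)} ≡ p^k h^k + (-1)^{k-1} p^{k-1} s  (mod x^p - 1)`. -/
theorem stmt_17 (p : ℕ) (hp : p.Prime) (h : ℤ[X])
    (hh : (X - 1 : ℤ[X]) ^ (p - 1) = (p : ℤ[X]) * h + ∑ i ∈ Finset.range p, X ^ i) :
    ∀ k : ℕ, 1 ≤ k →
      (X ^ p - 1 : ℤ[X]) ∣
        ((X - 1) ^ (k * (p - 1)) -
          ((p : ℤ[X]) ^ k * h ^ k +
            (-1 : ℤ[X]) ^ (k - 1) * (p : ℤ[X]) ^ (k - 1) * ∑ i ∈ Finset.range p, X ^ i)) := by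
  set s : ℤ[X] := ∑ i ∈ Finset.range p, X ^ i with hs
  -- s * (X - 1) = X^p - 1
  have hst : s * (X - 1 : ℤ[X]) = X ^ p - 1 := geom_sum_mul X p
  -- X^p - 1 ∣ s^2 - p s
  have l1 : ∃ b : ℤ[X], s * s - (p : ℤ[X]) * s = (X ^ p - 1) * b := by
    have h1 : (X - C (1 : ℤ)) ∣ s - (p : ℤ[X]) := by
      rw [dvd_iff_isRoot]
      simp [IsRoot, hs]
    obtain ⟨a, ha⟩ := h1
    refine ⟨a, ?_⟩
    rw [← hst]
    have ha' : s - (p : ℤ[X]) = (X - 1) * a := by simpa using ha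
    linear_combination s * ha'
  obtain ⟨b, hb⟩ := l1
  -- X^p - 1 ∣ p (h s + s)
  have l2 : ∃ c : ℤ[X], (p : ℤ[X]) * (h * s + s) = (X ^ p - 1) * c := by
    have h2 : (X - 1 : ℤ[X]) ^ (p - 1) = (X - 1) ^ (p - 2) * (X - 1) := by
      rw [← pow_succ]
      congr 1
      have := hp.two_le
      omega
    rw [h2] at hh
    exact ⟨(X - 1) ^ (p - 2) - b, by linear_combination (X - 1) ^ (p - 2) * hst - s * hh - hb⟩
  obtain ⟨c, hc⟩ := l2
  -- X^p - 1 ∣ p (h^(m+1) s - (-1)^(m+1) s)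
  have l3 : ∀ m : ℕ, ∃ d : ℤ[X],
      (p : ℤ[X]) * (h ^ (m + 1) * s - (-1 : ℤ[X]) ^ (m + 1) * s) = (X ^ p - 1) * d := by
    intro m
    induction m with
    | zero => exact ⟨c, by linear_combination hc⟩
    | succ n ih =>
        obtain ⟨d, hd⟩ := ih
        exact ⟨h * d + (-1 : ℤ[X]) ^ (n + 1) * c, by linear_combination h * hd + (-1 : ℤ[X]) ^ (n + 1) * hc⟩
  -- main induction
  have aux : ∀ m : ℕ,
      (X ^ p - 1 : ℤ[X]) ∣
        ((X - 1) ^ ((m + 1) * (p - 1)) -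
          ((p : ℤ[X]) ^ (m + 1) * h ^ (m + 1) + (-1 : ℤ[X]) ^ m * (p : ℤ[X]) ^ m * s)) := by
    intro m
    induction m with
    | zero =>
        refine ⟨0, ?_⟩
        simp [hh]
    | succ n ih =>
        obtain ⟨a, ha⟩ := ih
        obtain ⟨d, hd⟩ := l3 n
        refine ⟨(X - 1) ^ (p - 1) * a + (-1 : ℤ[X]) ^ n * (p : ℤ[X]) ^ n * b
          + (-1 : ℤ[X]) ^ n * (p : ℤ[X]) ^ n * c + (p : ℤ[X]) ^ n * d, ?_⟩
        have hpow : (n + 1 + 1) * (p - 1) = (n + 1) * (p - 1) + (p - 1) := by ring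
        rw [hpow, pow_add]
        linear_combination (X - 1) ^ (p - 1) * ha
          + ((p : ℤ[X]) ^ (n + 1) * h ^ (n + 1) + (-1 : ℤ[X]) ^ n * (p : ℤ[X]) ^ n * s) * hh
          + (-1 : ℤ[X]) ^ n * (p : ℤ[X]) ^ n * hb
          + (-1 : ℤ[X]) ^ n * (p : ℤ[X]) ^ n * hc
          + (p : ℤ[X]) ^ n * hd
  intro k hk
  obtain ⟨m, rfl⟩ : ∃ m, k = m + 1 := ⟨k - 1, by omega⟩
  simpa using aux m

end
end
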